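/- arXiv:2502.16594 — 2 statements merged into one kernel-verified Lean document; each statement's English description precedes it below -/
import Mathlib

section
/- (Basic inequality for the corrupted Lasso.) Let X be an n×p real matrix, y ∈ ℝ^n, and fix β̂ ∈ ℝ^p. Suppose y = Xβ̂ + XΔ* + √n e* + ε for some Δ* ∈ ℝ^p, e* ∈ ℝ^n, ε ∈ ℝ^n. Let (Δ̂, ê) minimize (2n)^{-1}‖y − X(β̂ + Δ) − √n e‖₂² + λ_Δ‖Δ‖₁ + λ_e‖e‖₁ over (Δ, e). Set z = Δ̂ − Δ*, v = ê − e*, T = supp(Δ*), E = supp(e*). If n^{-1}‖Xᵀε‖_∞ ≤ λ_Δ/2 and n^{-1/2}‖ε‖_∞ ≤ λ_e/2, then (1/2n)‖Xz + √n v‖₂² ≤ (3/2)λ_Δ‖z_T‖₁ − (1/2)λ_Δ‖z_{T^c}‖₁ + (3/2)λ_e‖v_E‖₁ − (1/2)λ_e‖v_{E^c}‖₁. -/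
/-- basic inequality for the corrupted Lasso. -/
theorem stmt6 {n p : ℕ} (hn : 0 < n) (X : Matrix (Fin n) (Fin p) ℝ)
    (y ε es eh : Fin n → ℝ) (βh Δs Δh : Fin p → ℝ) (lΔ le : ℝ)
    (hmodel : y = X.mulVec βh + X.mulVec Δs + (fun i => Real.sqrt n * es i) + ε)
    (hmin : ∀ (Δ : Fin p → ℝ) (e : Fin n → ℝ),
      (2 * n : ℝ)⁻¹ * (∑ i, (y i - X.mulVec (βh + Δh) i - Real.sqrt n * eh i)^2)
          + lΔ * (∑ j, |Δh j|) + le * (∑ i, |eh i|)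
        ≤ (2 * n : ℝ)⁻¹ * (∑ i, (y i - X.mulVec (βh + Δ) i - Real.sqrt n * e i)^2)
          + lΔ * (∑ j, |Δ j|) + le * (∑ i, |e i|))
    (hlΔ : (n : ℝ)⁻¹ * (⨆ j, |X.transpose.mulVec ε j|) ≤ lΔ / 2)
    (hle : (Real.sqrt n)⁻¹ * (⨆ i, |ε i|) ≤ le / 2) :
    (2 * n : ℝ)⁻¹ *
        (∑ i, (X.mulVec (fun j => Δh j - Δs j) i + Real.sqrt n * (eh i - es i))^2)
      ≤ (3/2) * lΔ * (∑ j, |if Δs j ≠ 0 then Δh j - Δs j else 0|)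
        - (1/2) * lΔ * (∑ j, |if Δs j = 0 then Δh j - Δs j else 0|)
        + (3/2) * le * (∑ i, |if es i ≠ 0 then eh i - es i else 0|)
        - (1/2) * le * (∑ i, |if es i = 0 then eh i - es i else 0|) := by
  have hn' : (0:ℝ) < n := by exact_mod_cast hn
  have hsn : (0:ℝ) < Real.sqrt n := Real.sqrt_pos.2 hn'
  have hnn : Real.sqrt n * Real.sqrt n = (n:ℝ) := Real.mul_self_sqrt hn'.le
  set z : Fin p → ℝ := fun j => Δh j - Δs j with hzdef
  have hlΔ0 : 0 ≤ lΔ := by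
    have h0 : 0 ≤ (n:ℝ)⁻¹ * (⨆ j, |X.transpose.mulVec ε j|) := by
      have := Real.iSup_nonneg (f := fun j => |X.transpose.mulVec ε j|) fun j => abs_nonneg _
      positivity
    linarith
  have hle0 : 0 ≤ le := by
    have h0 : 0 ≤ (Real.sqrt n)⁻¹ * (⨆ i, |ε i|) := by
      have := Real.iSup_nonneg (f := fun i => |ε i|) fun i => abs_nonneg _
      positivity
    linarith
  have key := hmin Δs es
  have hXz : ∀ i, X.mulVec z i = X.mulVec Δh i - X.mulVec Δs i := by
    intro i
    have h : X.mulVec z = X.mulVec Δh - X.mulVec Δs := by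
      rw [← Matrix.mulVec_sub]; rfl
    rw [h]; rfl
  have hres1 : ∀ i, y i - X.mulVec (βh + Δh) i - Real.sqrt n * eh i
      = ε i - (X.mulVec z i + Real.sqrt n * (eh i - es i)) := by
    intro i
    rw [hmodel, Matrix.mulVec_add, hXz]
    simp only [Pi.add_apply]
    ring
  have hres2 : ∀ i, y i - X.mulVec (βh + Δs) i - Real.sqrt n * es i = ε i := by
    intro i
    rw [hmodel, Matrix.mulVec_add]
    simp only [Pi.add_apply]
    ring
  have e1 : ∑ i, (y i - X.mulVec (βh + Δh) i - Real.sqrt n * eh i)^2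
      = ∑ i, (ε i - (X.mulVec z i + Real.sqrt n * (eh i - es i)))^2 :=
    Finset.sum_congr rfl fun i _ => by rw [hres1 i]
  have e2 : ∑ i, (y i - X.mulVec (βh + Δs) i - Real.sqrt n * es i)^2 = ∑ i, (ε i)^2 :=
    Finset.sum_congr rfl fun i _ => by rw [hres2 i]
  rw [e1, e2] at key
  set W := ∑ i, (X.mulVec z i + Real.sqrt n * (eh i - es i))^2 with hW
  set S := ∑ i, ε i * (X.mulVec z i + Real.sqrt n * (eh i - es i)) with hS
  have expand : ∑ i, (ε i - (X.mulVec z i + Real.sqrt n * (eh i - es i)))^2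
      = (∑ i, (ε i)^2) - 2*S + W := by
    rw [hS, hW, Finset.mul_sum, ← Finset.sum_sub_distrib, ← Finset.sum_add_distrib]
    exact Finset.sum_congr rfl fun i _ => by ring
  rw [expand] at key
  set MΔ := ⨆ j, |X.transpose.mulVec ε j| with hMΔ
  set Me := ⨆ i, |ε i| with hMe
  set A := ∑ j, |if Δs j ≠ 0 then Δh j - Δs j else 0| with hA
  set B := ∑ j, |if Δs j = 0 then Δh j - Δs j else 0| with hB
  set C := ∑ i, |if es i ≠ 0 then eh i - es i else 0| with hC
  set D := ∑ i, |if es i = 0 then eh i - es i else 0| with hD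
  have hS2 : S = (∑ i, ε i * X.mulVec z i) + Real.sqrt n * (∑ i, ε i * (eh i - es i)) := by
    rw [hS, Finset.mul_sum, ← Finset.sum_add_distrib]
    exact Finset.sum_congr rfl fun i _ => by ring
  have hswap : ∑ i, ε i * X.mulVec z i = ∑ j, X.transpose.mulVec ε j * z j := by
    simp only [Matrix.mulVec, dotProduct, Matrix.transpose_apply, Finset.mul_sum,
      Finset.sum_mul]
    rw [Finset.sum_comm]
    exact Finset.sum_congr rfl fun j _ => Finset.sum_congr rfl fun i _ => by ring
  have hb1 : (∑ j, X.transpose.mulVec ε j * z j) ≤ MΔ * ∑ j, |Δh j - Δs j| := by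
    rw [Finset.mul_sum]
    refine Finset.sum_le_sum fun j _ => ?_
    have h1 : |X.transpose.mulVec ε j| ≤ MΔ := by
      rw [hMΔ]
      exact le_ciSup (f := fun j => |X.transpose.mulVec ε j|)
        (Set.Finite.bddAbove (Set.finite_range _)) j
    calc X.transpose.mulVec ε j * z j ≤ |X.transpose.mulVec ε j * z j| := le_abs_self _
      _ = |X.transpose.mulVec ε j| * |z j| := abs_mul _ _
      _ ≤ MΔ * |Δh j - Δs j| := mul_le_mul_of_nonneg_right h1 (abs_nonneg _)
  have hb2 : (∑ i, ε i * (eh i - es i)) ≤ Me * ∑ i, |eh i - es i| := by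
    rw [Finset.mul_sum]
    refine Finset.sum_le_sum fun i _ => ?_
    have h1 : |ε i| ≤ Me := by
      rw [hMe]
      exact le_ciSup (f := fun i => |ε i|)
        (Set.Finite.bddAbove (Set.finite_range _)) i
    calc ε i * (eh i - es i) ≤ |ε i * (eh i - es i)| := le_abs_self _
      _ = |ε i| * |eh i - es i| := abs_mul _ _
      _ ≤ Me * |eh i - es i| := mul_le_mul_of_nonneg_right h1 (abs_nonneg _)
  have hsz0 : 0 ≤ ∑ j, |Δh j - Δs j| := Finset.sum_nonneg fun j _ => abs_nonneg _
  have hsv0 : 0 ≤ ∑ i, |eh i - es i| := Finset.sum_nonneg fun i _ => abs_nonneg _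
  have hinvn : (0:ℝ) ≤ (n:ℝ)⁻¹ := by positivity
  have hzsplit : ∑ j, |Δh j - Δs j| = A + B := by
    rw [hA, hB, ← Finset.sum_add_distrib]
    refine Finset.sum_congr rfl fun j _ => ?_
    by_cases h : Δs j = 0 <;> simp [h]
  have hvsplit : ∑ i, |eh i - es i| = C + D := by
    rw [hC, hD, ← Finset.sum_add_distrib]
    refine Finset.sum_congr rfl fun i _ => ?_
    by_cases h : es i = 0 <;> simp [h]
  have f2 : (n:ℝ)⁻¹ * S ≤ (lΔ/2) * (A + B) + (le/2) * (C + D) := by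
    rw [← hzsplit, ← hvsplit]
    have t1 : (n:ℝ)⁻¹ * (∑ j, X.transpose.mulVec ε j * z j)
        ≤ (lΔ/2) * ∑ j, |Δh j - Δs j| :=
      calc (n:ℝ)⁻¹ * (∑ j, X.transpose.mulVec ε j * z j)
          ≤ (n:ℝ)⁻¹ * (MΔ * ∑ j, |Δh j - Δs j|) := mul_le_mul_of_nonneg_left hb1 hinvn
        _ = ((n:ℝ)⁻¹ * MΔ) * ∑ j, |Δh j - Δs j| := by ring
        _ ≤ (lΔ/2) * ∑ j, |Δh j - Δs j| := mul_le_mul_of_nonneg_right hlΔ hsz0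
    have hns : (n:ℝ)⁻¹ * Real.sqrt n = (Real.sqrt n)⁻¹ := by
      rw [← hnn, mul_inv]
      field_simp
      rw [Real.sqrt_sq hsn.le]
    have t2 : (n:ℝ)⁻¹ * (Real.sqrt n * ∑ i, ε i * (eh i - es i))
        ≤ (le/2) * ∑ i, |eh i - es i| :=
      calc (n:ℝ)⁻¹ * (Real.sqrt n * ∑ i, ε i * (eh i - es i))
          ≤ (n:ℝ)⁻¹ * (Real.sqrt n * (Me * ∑ i, |eh i - es i|)) := by
            exact mul_le_mul_of_nonneg_left (mul_le_mul_of_nonneg_left hb2 hsn.le) hinvn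
        _ = ((n:ℝ)⁻¹ * Real.sqrt n) * (Me * ∑ i, |eh i - es i|) := by ring
        _ = ((Real.sqrt n)⁻¹ * Me) * ∑ i, |eh i - es i| := by rw [hns]; ring
        _ ≤ (le/2) * ∑ i, |eh i - es i| := mul_le_mul_of_nonneg_right hle hsv0
    calc (n:ℝ)⁻¹ * S
        = (n:ℝ)⁻¹ * (∑ j, X.transpose.mulVec ε j * z j)
          + (n:ℝ)⁻¹ * (Real.sqrt n * ∑ i, ε i * (eh i - es i)) := by
          rw [hS2, hswap]; ring
      _ ≤ _ := add_le_add t1 t2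
  have f3 : lΔ * ((∑ j, |Δs j|) - ∑ j, |Δh j|) ≤ lΔ * (A - B) := by
    refine mul_le_mul_of_nonneg_left ?_ hlΔ0
    rw [hA, hB, ← Finset.sum_sub_distrib, ← Finset.sum_sub_distrib]
    refine Finset.sum_le_sum fun j _ => ?_
    by_cases h : Δs j = 0
    · simp [h]
    · simp only [h, ne_eq, not_false_eq_true, if_true, if_neg, if_pos, abs_zero, sub_zero,
        ite_false, ite_true]
      have h1 := abs_sub_abs_le_abs_sub (Δs j) (Δh j)
      rw [abs_sub_comm] at h1
      linarith
  have f4 : le * ((∑ i, |es i|) - ∑ i, |eh i|) ≤ le * (C - D) := by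
    refine mul_le_mul_of_nonneg_left ?_ hle0
    rw [hC, hD, ← Finset.sum_sub_distrib, ← Finset.sum_sub_distrib]
    refine Finset.sum_le_sum fun i _ => ?_
    by_cases h : es i = 0
    · simp [h]
    · simp only [h, ne_eq, not_false_eq_true, if_true, if_neg, if_pos, abs_zero, sub_zero,
        ite_false, ite_true]
      have h1 := abs_sub_abs_le_abs_sub (es i) (eh i)
      rw [abs_sub_comm] at h1
      linarith
  have hcS : (2*(n:ℝ))⁻¹ * (2*S) = (n:ℝ)⁻¹ * S := by
    rw [mul_inv]; ring
  linarith [key, f2, f3, f4, hcS]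
end

section
/- (Cone condition.) Under the hypotheses and conclusion of the basic inequality for the corrupted Lasso, the error vectors z = Δ̂ − Δ* and v = ê − e* satisfy λ_Δ‖z‖₁ + λ_e‖v‖₁ ≤ 4λ_Δ‖z_T‖₁ + 4λ_e‖v_E‖₁, and consequently λ_Δ‖z‖₁ ≤ 4√(s_Δ) λ_Δ ‖z‖₂ + 4√k λ_e ‖v‖₂, where s_Δ = |T| and k = |E|. -/
open Finset

lemma sum_abs_le_sqrt_card_mul_sqrt_sum_sq {ι : Type*} [Fintype ι] (s : Finset ι) (f : ι → ℝ) :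
    ∑ i ∈ s, |f i| ≤ √(#s : ℝ) * √(∑ i, f i ^ 2) := by
  have hs : ∑ i ∈ s, f i ^ 2 ≤ ∑ i, f i ^ 2 :=
    sum_le_sum_of_subset_of_nonneg (subset_univ s) fun i _ _ => sq_nonneg (f i)
  calc ∑ i ∈ s, |f i| ≤ √(#s * ∑ i ∈ s, f i ^ 2) := by
        refine Real.le_sqrt_of_sq_le ?_
        simpa only [sq_abs] using sq_sum_le_card_mul_sum_sq (s := s) (f := fun i => |f i|)
    _ ≤ √(#s : ℝ) * √(∑ i, f i ^ 2) := by
        rw [Real.sqrt_mul (Nat.cast_nonneg _)]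
        gcongr

lemma cone_condition_of_basic_inequality {ι κ : Type*} [Fintype ι] [Fintype κ]
    [DecidableEq ι] [DecidableEq κ] (z : ι → ℝ) (v : κ → ℝ) (T : Finset ι) (E : Finset κ)
    (lΔ le : ℝ)
    (h : 0 ≤ (3/2) * lΔ * (∑ j ∈ T, |z j|) - (1/2) * lΔ * (∑ j ∈ Tᶜ, |z j|)
      + (3/2) * le * (∑ i ∈ E, |v i|) - (1/2) * le * (∑ i ∈ Eᶜ, |v i|)) :
    lΔ * (∑ j, |z j|) + le * (∑ i, |v i|)
      ≤ 4 * lΔ * (∑ j ∈ T, |z j|) + 4 * le * (∑ i ∈ E, |v i|) := by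
  -- after splitting both ℓ¹ norms along `T` and `E`, the claim is twice `h`
  rw [← sum_add_sum_compl T, ← sum_add_sum_compl E]
  linarith

theorem stmt7_general {n p : ℕ} (X : Matrix (Fin n) (Fin p) ℝ)
    (z : Fin p → ℝ) (v : Fin n → ℝ) (T : Finset (Fin p)) (E : Finset (Fin n))
    (lΔ le : ℝ) (hlΔ : 0 ≤ lΔ) (hle : 0 ≤ le)
    (hbasic : (2 * n : ℝ)⁻¹ * (∑ i, (X.mulVec z i + Real.sqrt n * v i)^2) ≤
      (3/2) * lΔ * (∑ j ∈ T, |z j|) - (1/2) * lΔ * (∑ j ∈ Tᶜ, |z j|)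
      + (3/2) * le * (∑ i ∈ E, |v i|) - (1/2) * le * (∑ i ∈ Eᶜ, |v i|)) :
    lΔ * (∑ j, |z j|) + le * (∑ i, |v i|)
        ≤ 4 * lΔ * (∑ j ∈ T, |z j|) + 4 * le * (∑ i ∈ E, |v i|)
    ∧ lΔ * (∑ j, |z j|)
        ≤ 4 * Real.sqrt T.card * lΔ * Real.sqrt (∑ j, (z j)^2)
          + 4 * Real.sqrt E.card * le * Real.sqrt (∑ i, (v i)^2) := by
  have hcone := cone_condition_of_basic_inequality z v T E lΔ le
    ((by positivity : (0 : ℝ) ≤ (2 * n : ℝ)⁻¹ * _).trans hbasic)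
  refine ⟨hcone, ?_⟩
  have hzT := mul_le_mul_of_nonneg_left (sum_abs_le_sqrt_card_mul_sqrt_sum_sq T z) hlΔ
  have hvE := mul_le_mul_of_nonneg_left (sum_abs_le_sqrt_card_mul_sqrt_sum_sq E v) hle
  have hv : 0 ≤ le * ∑ i, |v i| := by positivity
  linarith

/-- cone condition for the corrupted Lasso errors. -/
theorem stmt7 {n p : ℕ} (hn : 0 < n) (X : Matrix (Fin n) (Fin p) ℝ)
    (z : Fin p → ℝ) (v : Fin n → ℝ) (T : Finset (Fin p)) (E : Finset (Fin n))
    (lΔ le : ℝ) (hlΔ : 0 ≤ lΔ) (hle : 0 ≤ le)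
    (hbasic : (2 * n : ℝ)⁻¹ * (∑ i, (X.mulVec z i + Real.sqrt n * v i)^2) ≤
      (3/2) * lΔ * (∑ j ∈ T, |z j|) - (1/2) * lΔ * (∑ j ∈ Tᶜ, |z j|)
      + (3/2) * le * (∑ i ∈ E, |v i|) - (1/2) * le * (∑ i ∈ Eᶜ, |v i|)) :
    lΔ * (∑ j, |z j|) + le * (∑ i, |v i|)
        ≤ 4 * lΔ * (∑ j ∈ T, |z j|) + 4 * le * (∑ i ∈ E, |v i|)
    ∧ lΔ * (∑ j, |z j|)
        ≤ 4 * Real.sqrt T.card * lΔ * Real.sqrt (∑ j, (z j)^2)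
          + 4 * Real.sqrt E.card * le * Real.sqrt (∑ i, (v i)^2) :=
  stmt7_general X z v T E lΔ le hlΔ hle hbasic
end
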